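/- Let F : [r,T]² × C([0,T],ℝ^m) → ℝ^m be non-anticipative and product measurable with constants λ₀, c₀ ≥ 0 such that |F(u,t,x) − F(u,s,x)| ≤ λ₀ d_∞((t,x),(s,x)) and |F(t,s,x)| ≤ c₀(1 + ‖x‖_∞) for all r ≤ s < t < u ≤ T and x. Let (ₙY) be adapted continuous processes with, for some p ≥ 1 and c_{p,0} ≥ 0, E[‖ₙY‖_∞^p] + E[‖ₙY^s − ₙY^t‖_∞^p]/|s−t|^{p/2} ≤ c_{p,0}(1 + E[‖ₙY^r‖_∞^p]) for all n and s ≠ t in [r,T]. Then there is c_p > 0 such that, with γₙ(s) := Δsₙ/Δs̄ₙ (ratio of the current to the next partition increment) and s̲ₙ the predecessor of the partition point below s, E[ max_{j} | ∫_r^{t_{j,n}} F(t_{j,n}, s̲ₙ, ₙY)(γₙ(s) − 1) ds |^p ] ≤ c_p |𝕋ₙ|^{p/2} (1 + E[‖ₙY^r‖_∞^p]) for every n. -/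

import Mathlib

open MeasureTheory ProbabilityTheory Filter Set ENNReal

noncomputable section

abbrev Vec (m : ℕ) := EuclideanSpace ℝ (Fin m)
abbrev Mat (m d : ℕ) := EuclideanSpace ℝ (Fin m × Fin d)

def matVec {m d : ℕ} (A : Mat m d) (v : Vec d) : Vec m :=
  (EuclideanSpace.equiv (Fin m) ℝ).symm fun k => ∑ l, A (k, l) * v l

/-- Path stopped at time `s`. -/
def stopAt {E : Type*} (x : ℝ → E) (s : ℝ) : ℝ → E := fun u => x (min u s)

/-- Sup norm over `[0,T]`. -/
def supNorm {E : Type*} [NormedAddCommGroup E] (T : ℝ) (x : ℝ → E) : ℝ :=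
  ⨆ u : Icc (0:ℝ) T, ‖x u‖

def esupNorm {E : Type*} [NormedAddCommGroup E] (T : ℝ) (x : ℝ → E) : ℝ≥0∞ :=
  ⨆ u : Icc (0:ℝ) T, (‖x u‖₊ : ℝ≥0∞)

/-- The pseudometric `d_∞((t,x),(s,y)) = |t-s|^{1/2} + ‖x^t - y^s‖_∞`. -/
def dInfty {E : Type*} [NormedAddCommGroup E] (T t : ℝ) (x : ℝ → E) (s : ℝ) (y : ℝ → E) : ℝ :=
  |t - s| ^ (1/2 : ℝ) + supNorm T (fun u => stopAt x t u - stopAt y s u)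

/-- Delayed α-Hölder norm on `[0,T]` with Hölder seminorm over `[r,T]`. -/
def holderNorm {E : Type*} [NormedAddCommGroup E] (α r T : ℝ) (x : ℝ → E) : ℝ :=
  supNorm T (stopAt x r) +
    ⨆ p : {q : Icc r T × Icc r T // (q.1 : ℝ) ≠ (q.2 : ℝ)},
      ‖x p.1.1 - x p.1.2‖ / |(p.1.1 : ℝ) - (p.1.2 : ℝ)| ^ α

def eholderNorm {E : Type*} [NormedAddCommGroup E] (α r T : ℝ) (x : ℝ → E) : ℝ≥0∞ :=
  esupNorm T (stopAt x r) +
    ⨆ (s : Icc r T) (t : Icc r T) (_ : (s : ℝ) ≠ (t : ℝ)),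
      (‖x s - x t‖₊ : ℝ≥0∞) / ENNReal.ofReal (|(s : ℝ) - (t : ℝ)| ^ α)

/-- A sequence of partitions of `[r,T]`. -/
structure PartitionSeq (r T : ℝ) where
  k : ℕ → ℕ
  t : ℕ → ℕ → ℝ
  k_pos : ∀ n, 0 < k n
  left : ∀ n, t n 0 = r
  right : ∀ n, t n (k n) = T
  mono : ∀ n, ∀ i < k n, t n i < t n (i + 1)

def PartitionSeq.mesh {r T : ℝ} (P : PartitionSeq r T) (n : ℕ) : ℝ :=
  (Finset.range (P.k n)).sup' (Finset.nonempty_range_iff.mpr (P.k_pos n).ne')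
    (fun i => P.t n (i + 1) - P.t n i)

/-- Balanced sequence of partitions with constant `c`. -/
def PartitionSeq.Balanced {r T : ℝ} (P : PartitionSeq r T) (c : ℝ) : Prop :=
  ∀ n, ∀ i < P.k n, P.mesh n ≤ c * (P.t n (i + 1) - P.t n i)

open Classical in
/-- Greatest index `i ≤ kₙ` with `t_{i,n} < u`. -/
def PartitionSeq.idxLt {r T : ℝ} (P : PartitionSeq r T) (n : ℕ) (u : ℝ) : ℕ :=
  Nat.findGreatest (fun i => P.t n i < u) (P.k n)

open Classical in
/-- Greatest index `i ≤ kₙ - 1` with `t_{i,n} ≤ u`. -/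
def PartitionSeq.idxLe {r T : ℝ} (P : PartitionSeq r T) (n : ℕ) (u : ℝ) : ℕ :=
  Nat.findGreatest (fun i => P.t n i ≤ u) (P.k n - 1)

/-- `uₙ`, the partition point below `u`. -/
def PartitionSeq.below {r T : ℝ} (P : PartitionSeq r T) (n : ℕ) (u : ℝ) : ℝ :=
  P.t n (P.idxLe n u)

/-- `u̲ₙ`, the predecessor of the partition point below `u`. -/
def PartitionSeq.pred {r T : ℝ} (P : PartitionSeq r T) (n : ℕ) (u : ℝ) : ℝ :=
  P.t n (P.idxLe n u - 1)

/-- `γₙ(u) = Δuₙ / Δūₙ`. -/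
def PartitionSeq.gamma {r T : ℝ} (P : PartitionSeq r T) (n : ℕ) (u : ℝ) : ℝ :=
  (P.t n (P.idxLe n u) - P.t n (P.idxLe n u - 1)) /
    (P.t n (P.idxLe n u + 1) - P.t n (P.idxLe n u))

/-- Delayed piecewise-linear interpolation along the `n`-th partition. -/
def PartitionSeq.interp {r T : ℝ} (P : PartitionSeq r T) (n : ℕ) {E : Type*}
    [NormedAddCommGroup E] [NormedSpace ℝ E] (x : ℝ → E) (u : ℝ) : E :=
  if u ≤ P.t n 1 then x (min u r)
  else x (P.t n (P.idxLt n u - 1)) +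
    ((u - P.t n (P.idxLt n u)) / (P.t n (P.idxLt n u + 1) - P.t n (P.idxLt n u))) •
      (x (P.t n (P.idxLt n u)) - x (P.t n (P.idxLt n u - 1)))

/-- Piecewise-constant derivative of the delayed linear interpolation. -/
def PartitionSeq.interpDeriv {r T : ℝ} (P : PartitionSeq r T) (n : ℕ) {E : Type*}
    [NormedAddCommGroup E] [NormedSpace ℝ E] (x : ℝ → E) (u : ℝ) : E :=
  if u ≤ P.t n 1 then 0
  else (P.t n (P.idxLt n u + 1) - P.t n (P.idxLt n u))⁻¹ •
    (x (P.t n (P.idxLt n u)) - x (P.t n (P.idxLt n u - 1)))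

/-- Standard d-dimensional Brownian motion. -/
def IsBrownianMotion {Ω : Type*} [MeasurableSpace Ω] {d : ℕ}
    (μ : Measure Ω) (W : ℝ → Ω → Vec d) : Prop :=
  (∀ ω, Continuous fun u => W u ω) ∧ (∀ᵐ ω ∂μ, W 0 ω = 0) ∧
  (∀ (N : ℕ) (τ : ℕ → ℝ), Monotone τ → (∀ i, 0 ≤ τ i) →
    iIndepFun
      (fun p : Fin N × Fin d => fun ω => W (τ (p.1 + 1)) ω p.2 - W (τ p.1) ω p.2) μ) ∧
  (∀ s u : ℝ, 0 ≤ s → s ≤ u → ∀ l : Fin d,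
    Measure.map (fun ω => W u ω l - W s ω l) μ = gaussianReal 0 (Real.toNNReal (u - s)))

/-- Brownian motion with respect to a filtration. -/
def IsFilteredBM {Ω : Type*} [mΩ : MeasurableSpace Ω] {d : ℕ} (μ : Measure Ω)
    (F : Filtration ℝ mΩ) (W : ℝ → Ω → Vec d) : Prop :=
  IsBrownianMotion μ W ∧ Adapted F W ∧
  ∀ s u : ℝ, 0 ≤ s → s ≤ u →
    Indep (MeasurableSpace.comap (fun ω => W u ω - W s ω) inferInstance) (F s) μ

/-- Riemann sum for a stochastic integral. -/
def riemannSum {Ω : Type*} {m d : ℕ} (W : ℝ → Ω → Vec d) (X : ℝ → Ω → Mat m d)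
    (τ : ℕ → ℝ) (K : ℕ) (ω : Ω) : Vec m :=
  ∑ i ∈ Finset.range K, matVec (X (τ i) ω) (W (τ (i + 1)) ω - W (τ i) ω)

/-- `I` is the Itô integral `∫_a^b X dW`: left-point Riemann sums along any sequence of
partitions of `[a,b]` with vanishing mesh converge to `I` in measure (in probability). -/
def IsItoIntegral {Ω : Type*} [MeasurableSpace Ω] {m d : ℕ} (μ : Measure Ω)
    (W : ℝ → Ω → Vec d) (X : ℝ → Ω → Mat m d) (a b : ℝ) (I : Ω → Vec m) : Prop :=
  ∀ (τ : ℕ → ℕ → ℝ) (K : ℕ → ℕ),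
    (∀ n, 0 < K n ∧ τ n 0 = a ∧ τ n (K n) = b ∧ ∀ i < K n, τ n i < τ n (i + 1)) →
    Tendsto (fun n => ⨆ i : Fin (K n), (τ n (i + 1) - τ n i)) atTop (nhds 0) →
    TendstoInMeasure μ (fun n ω => riemannSum W X (τ n) (K n) ω) atTop I

/-- Vertical perturbation of a path at time `s`. -/
def vertShift {E : Type*} [Add E] (x : ℝ → E) (s : ℝ) (h : E) : ℝ → E :=
  fun u => if s ≤ u then x u + h else x u

/-- Vertical (Dupire) derivative of a non-anticipative functional. -/
def HasVertDerivAt {E F : Type*} [NormedAddCommGroup E] [NormedSpace ℝ E]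
    [NormedAddCommGroup F] [NormedSpace ℝ F]
    (G : ℝ → (ℝ → E) → F) (s : ℝ) (x : ℝ → E) (D : E →L[ℝ] F) : Prop :=
  HasFDerivAt (fun h : E => G s (vertShift x s h)) D 0

/-- Horizontal derivative of a non-anticipative functional. -/
def HasHorizDerivAt {E F : Type*} [NormedAddCommGroup E]
    [NormedAddCommGroup F] [NormedSpace ℝ F]
    (G : ℝ → (ℝ → E) → F) (s : ℝ) (x : ℝ → E) (D : F) : Prop :=
  HasDerivWithinAt (fun u => G u (stopAt x s)) D (Ici s) s

/-- Càdlàg path on `ℝ`. -/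
def Cadlag {E : Type*} [TopologicalSpace E] (x : ℝ → E) : Prop :=
  (∀ u, ContinuousWithinAt x (Ici u) u) ∧ ∀ u, ∃ L, Tendsto x (nhdsWithin u (Iio u)) (nhds L)

/-- `d_∞`-continuity of a functional on `[r,t₀) × D`. -/
def DInftyContinuous {E F : Type*} [NormedAddCommGroup E] [NormedAddCommGroup F]
    (r t₀ T : ℝ) (G : ℝ → (ℝ → E) → F) : Prop :=
  ∀ s ∈ Ico r t₀, ∀ x : ℝ → E, Cadlag x → ∀ ε > 0, ∃ δ > 0,
    ∀ u ∈ Ico r t₀, ∀ y : ℝ → E, Cadlag y → dInfty T u y s x < δ → ‖G u y - G s x‖ < ε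

/-- Bounded on bounded sets. -/
def BddOnBounded {E F : Type*} [NormedAddCommGroup E] [NormedAddCommGroup F]
    (r t₀ T : ℝ) (G : ℝ → (ℝ → E) → F) : Prop :=
  ∀ R > 0, ∃ C, ∀ s ∈ Ico r t₀, ∀ x : ℝ → E, Cadlag x → supNorm T x ≤ R → ‖G s x‖ ≤ C

/-- The correction term `ρ` built from the vertical derivative of `σ`. -/
def corrTerm {m d : ℕ} (σ : ℝ → ℝ → (ℝ → Vec m) → Mat m d)
    (σx : ℝ → ℝ → (ℝ → Vec m) → (Vec m →L[ℝ] Mat m d))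
    (t s : ℝ) (x : ℝ → Vec m) : Vec m :=
  if s < t then
    (EuclideanSpace.equiv (Fin m) ℝ).symm fun k =>
      ∑ l, (σx t s x ((EuclideanSpace.equiv (Fin m) ℝ).symm fun k' => σ s s x (k', l))) (k, l)
  else 0


/-- Delayed Sobolev norm `‖x‖_{1,p,r}` computed from a choice `x'` of weak derivative. -/
def sobNorm {E : Type*} [NormedAddCommGroup E] (p r T : ℝ) (x x' : ℝ → E) : ℝ :=
  supNorm T (stopAt x r) + (∫ s in Icc r T, ‖x' s‖ ^ p) ^ (1/p)

/-- Membership in the delayed Sobolev space `W_r^{1,p}([0,T],E)`, witnessed by the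
weak derivative `x'`. -/
def IsW1p {E : Type*} [NormedAddCommGroup E] [NormedSpace ℝ E] (p r T : ℝ)
    (x x' : ℝ → E) : Prop :=
  ContinuousOn x (Icc 0 T) ∧ IntervalIntegrable x' MeasureTheory.volume r T ∧
  (∀ t ∈ Icc r T, x t = x r + ∫ s in r..t, x' s) ∧
  MeasureTheory.IntegrableOn (fun s => ‖x' s‖ ^ p) (Icc r T) MeasureTheory.volume

/-- Solution of a path-dependent stochastic Volterra integral equation on `[r,T]` with
(possibly `ω`-dependent) drift `drift` and diffusion `Sig`; `S t` is the Itô integral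
`∫_r^t Sig(t,s,·) dW_s`. -/
def SolvesSVIE {m d : ℕ} {Ω : Type*} [MeasurableSpace Ω] (μ : Measure Ω)
    (W : ℝ → Ω → Vec d) (r T : ℝ)
    (drift : ℝ → ℝ → Ω → Vec m) (Sig : ℝ → ℝ → Ω → Mat m d)
    (Y : ℝ → Ω → Vec m) (S : ℝ → Ω → Vec m) : Prop :=
  (∀ ω, Continuous fun u => Y u ω) ∧
  (∀ t ∈ Icc r T, ∀ᵐ ω ∂μ, MeasureTheory.IntegrableOn (fun s => drift t s ω) (Ioc r t)) ∧
  (∀ t ∈ Icc r T, IsItoIntegral μ W (fun s => Sig t s) r t (S t)) ∧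
  (∀ t ∈ Icc r T, ∀ᵐ ω ∂μ, Y t ω = Y r ω + (∫ s in Ioc r t, drift t s ω) + S t ω)

/-- σ-algebra generated by `ξ` stopped at `r` up to time `t` and the increments of `W`
after time `r` up to time `t` (generating the filtration used for strong solutions). -/
def naturalSigma {m d : ℕ} {Ω : Type*} [MeasurableSpace Ω]
    (ξ : ℝ → Ω → Vec m) (W : ℝ → Ω → Vec d) (r t : ℝ) : MeasurableSpace Ω :=
  (⨆ s ∈ Icc (0:ℝ) t, MeasurableSpace.comap (fun ω => ξ (min s r) ω) inferInstance) ⊔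
  (⨆ s ∈ Icc r (max r t), MeasurableSpace.comap (fun ω => W s ω - W r ω) inferInstance)

/-- `x` solves the deterministic Volterra integral equation
`x(t) = x(r) + ∫_r^t (b - ρ/2)(t,s,x) ds + ∫_r^t σ(t,s,x) dh(s)` on `[r,T]` with initial
condition `x^r = x̂^r`, where `h` has weak derivative `h'`. -/
def SolvesSupportVIE {m d : ℕ} (r T : ℝ)
    (b : ℝ → ℝ → (ℝ → Vec m) → Vec m)
    (σ : ℝ → ℝ → (ℝ → Vec m) → Mat m d)
    (σx : ℝ → ℝ → (ℝ → Vec m) → (Vec m →L[ℝ] Mat m d))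
    (xhat : ℝ → Vec m) (h' : ℝ → Vec d) (x : ℝ → Vec m) : Prop :=
  ContinuousOn x (Icc 0 T) ∧ (∀ u ∈ Icc 0 r, x u = xhat u) ∧
  (∀ t ∈ Icc r T, MeasureTheory.IntegrableOn
    (fun s => b t s x - (1/2 : ℝ) • corrTerm σ σx t s x + matVec (σ t s x) (h' s)) (Ioc r t)) ∧
  (∀ t ∈ Icc r T, x t = x r +
    ∫ s in Ioc r t, (b t s x - (1/2 : ℝ) • corrTerm σ σx t s x + matVec (σ t s x) (h' s)))

/-- The extension `ρ̄` of the correction term to the closed triangle `s ≤ t`. -/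
def corrTermBar {m d : ℕ} (σ : ℝ → ℝ → (ℝ → Vec m) → Mat m d)
    (σx : ℝ → ℝ → (ℝ → Vec m) → (Vec m →L[ℝ] Mat m d))
    (t s : ℝ) (x : ℝ → Vec m) : Vec m :=
  if s ≤ t then
    (EuclideanSpace.equiv (Fin m) ℝ).symm fun k =>
      ∑ l, (σx t s x ((EuclideanSpace.equiv (Fin m) ℝ).symm fun k' => σ s s x (k', l))) (k, l)
  else 0

/-- The weak derivative `∂_t ρ̄` of the extended correction term in its first variable,
built from `∂_t ∂_x σ`. -/
def corrTermBarT {m d : ℕ} (σ : ℝ → ℝ → (ℝ → Vec m) → Mat m d)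
    (σxt : ℝ → ℝ → (ℝ → Vec m) → (Vec m →L[ℝ] Mat m d))
    (t s : ℝ) (x : ℝ → Vec m) : Vec m :=
  if s ≤ t then
    (EuclideanSpace.equiv (Fin m) ℝ).symm fun k =>
      ∑ l, (σxt t s x ((EuclideanSpace.equiv (Fin m) ℝ).symm fun k' => σ s s x (k', l))) (k, l)
  else 0

end

/-! On each cell `(t_i, t_{i+1})` of the partition the weight `γₙ - 1` is the constant
`(Δt_i - Δt_{i+1}) / Δt_{i+1}` and the delayed argument is `t_{i-1}`, so the integral up to
`t_j` equals `∑_{i<j} (Δt_i - Δt_{i+1}) G(t_j, t_{i-1}, x)`. Summation by parts turns this into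
`∑_{i<j} Δt_i (G(t_j, t_{i-1}, x) - G(t_j, t_{i-2}, x)) - Δt_j G(t_j, t_{j-2}, x)`: the
Lipschitz bound controls each difference by `λ₀ (|𝕋ₙ|^{1/2} + ‖x^{t_{i-1}} - x^{t_{i-2}}‖_∞)`
and the growth bound the boundary term by `|𝕋ₙ| c₀ (1 + ‖x‖_∞)`, uniformly in `j`. In `L^p`,
by Minkowski's inequality and the moment bound, each `‖ₙY^{t_{i-1}} - ₙY^{t_{i-2}}‖_∞` is again
of size `|𝕋ₙ|^{1/2}`, and `∑ Δt_i = T - r`. -/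

theorem ENNReal.ofReal_rpow_div_two {a p : ℝ} (ha : 0 ≤ a) (hp : 0 ≤ p) :
    ENNReal.ofReal (a ^ (p / 2)) = ENNReal.ofReal √a ^ p := by
  rw [ENNReal.ofReal_rpow_of_nonneg (Real.sqrt_nonneg a) hp, Real.sqrt_eq_rpow,
    ← Real.rpow_mul ha, one_div_mul_eq_div]

theorem ENNReal.mul_one_add_mul_rpow_le (c a : ℝ≥0∞) {b : ℝ≥0∞} (hb : 1 ≤ b) {p : ℝ}
    (hp : 0 < p) : (c * (1 + (a * b) ^ (1 / p))) ^ p ≤ (c * (1 + a ^ (1 / p))) ^ p * b := by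
  have hb' : 1 ≤ b ^ (1 / p) := ENNReal.one_le_rpow hb (by positivity)
  calc (c * (1 + (a * b) ^ (1 / p))) ^ p ≤ (c * (1 + a ^ (1 / p)) * b ^ (1 / p)) ^ p := by
        rw [ENNReal.mul_rpow_of_nonneg _ _ (by positivity : 0 ≤ 1 / p), mul_assoc, add_mul,
          one_mul]
        gcongr
    _ = (c * (1 + a ^ (1 / p))) ^ p * b := by
        rw [ENNReal.mul_rpow_of_nonneg _ _ hp.le, ← ENNReal.rpow_mul, one_div_mul_cancel hp.ne',
          ENNReal.rpow_one]

theorem Finset.sum_range_sub_smul_eq_sum_smul_sub {R V : Type*} [Ring R] [AddCommGroup V]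
    [Module R V] {Δ : ℕ → R} (a : ℕ → V) (hΔ : Δ 0 = 0) (j : ℕ) :
    ∑ i ∈ Finset.range j, (Δ i - Δ (i + 1)) • a i
      = ∑ i ∈ Finset.range j, Δ i • (a i - a (i - 1)) - Δ j • a (j - 1) := by
  induction j with
  | zero => simp [hΔ]
  | succ j ih =>
    rw [Finset.sum_range_succ, ih, Finset.sum_range_succ, Nat.add_sub_cancel]
    simp only [sub_smul, smul_sub]
    abel

section PathNorms

variable {E : Type*} [NormedAddCommGroup E]

theorem supNorm_nonneg (T : ℝ) (x : ℝ → E) : 0 ≤ supNorm T x :=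
  Real.iSup_nonneg fun _ => norm_nonneg _

theorem ofReal_supNorm_le_esupNorm (T : ℝ) (x : ℝ → E) :
    ENNReal.ofReal (supNorm T x) ≤ esupNorm T x := by
  by_cases htop : esupNorm T x = ⊤
  · simp [htop]
  refine ENNReal.ofReal_le_of_le_toReal (Real.iSup_le (fun u => ?_) ENNReal.toReal_nonneg)
  rw [← ENNReal.ofReal_le_iff_le_toReal htop, ofReal_norm]
  exact le_iSup (fun u : Icc (0:ℝ) T => (‖x u‖₊ : ℝ≥0∞)) u

theorem measurable_esupNorm {Ω : Type*} [MeasurableSpace Ω] [MeasurableSpace E]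
    [OpensMeasurableSpace E] (T : ℝ) {f : Ω → ℝ → E} (hc : ∀ ω, Continuous (f ω))
    (hm : ∀ u, Measurable fun ω => f ω u) :
    Measurable fun ω => esupNorm T (f ω) := by
  obtain ⟨S, hSc, hSd⟩ := TopologicalSpace.exists_countable_dense (Icc (0:ℝ) T)
  have : Countable S := hSc.to_subtype
  have hdense : ∀ ω, esupNorm T (f ω) = ⨆ u : S, (‖f ω u‖₊ : ℝ≥0∞) := fun ω =>
    (hSd.ciSup' (f := fun u : Icc (0:ℝ) T => (‖f ω u‖₊ : ℝ≥0∞)) (by fun_prop)).symm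
  simp_rw [hdense]
  exact Measurable.iSup fun u => (hm _).nnnorm.coe_nnreal_ennreal

end PathNorms

section LpSeminorm

variable {Ω : Type*} [MeasurableSpace Ω] {μ : Measure Ω} {p : ℝ}

theorem lintegral_rpow_eq_eLpNorm'_rpow (f : Ω → ℝ≥0∞) (hp : 0 < p) :
    ∫⁻ ω, f ω ^ p ∂μ = eLpNorm' f p μ ^ p := by
  rw [eLpNorm'_eq_lintegral_enorm, ← ENNReal.rpow_mul, one_div_mul_cancel hp.ne',
    ENNReal.rpow_one]
  rfl

theorem eLpNorm'_le_of_lintegral_rpow_le {f : Ω → ℝ≥0∞} {C D : ℝ≥0∞} (hp : 0 < p)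
    (h : ∫⁻ ω, f ω ^ p ∂μ ≤ C * D ^ p) : eLpNorm' f p μ ≤ C ^ (1 / p) * D := by
  calc eLpNorm' f p μ = (∫⁻ ω, f ω ^ p ∂μ) ^ (1 / p) := rfl
    _ ≤ (C * D ^ p) ^ (1 / p) := by gcongr
    _ = C ^ (1 / p) * D := by
      rw [ENNReal.mul_rpow_of_nonneg _ _ (by positivity), ← ENNReal.rpow_mul,
        mul_one_div_cancel hp.ne', ENNReal.rpow_one]

theorem eLpNorm'_const_mul_le (c : ℝ≥0∞) {f : Ω → ℝ≥0∞} (hf : AEMeasurable f μ) (hp : 0 < p) :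
    eLpNorm' (fun ω => c * f ω) p μ ≤ c * eLpNorm' f p μ :=
  eLpNorm'_le_mul_eLpNorm'_of_ae_le_mul hf.aestronglyMeasurable
    (Eventually.of_forall fun _ => le_rfl) hp

theorem eLpNorm'_const_add_le [IsProbabilityMeasure μ] (a : ℝ≥0∞) {f : Ω → ℝ≥0∞}
    (hf : AEMeasurable f μ) (hp : 1 ≤ p) :
    eLpNorm' (fun ω => a + f ω) p μ ≤ a + eLpNorm' f p μ :=
  (eLpNorm'_add_le (f := fun _ => a) aestronglyMeasurable_const hf.aestronglyMeasurable hp).trans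
    (by rw [eLpNorm'_const_of_isProbabilityMeasure a (by linarith), enorm_eq_self])

end LpSeminorm

namespace PartitionSeq

variable {r T : ℝ} (P : PartitionSeq r T) (n : ℕ)

/-- The increment `Δt_{i,n} = t_{i,n} - t_{i-1,n}`; it vanishes at `i = 0`, where `i - 1 = 0`
in `ℕ`. -/
def incr (i : ℕ) : ℝ := P.t n i - P.t n (i - 1)

theorem strictMonoOn_t : StrictMonoOn (P.t n) (Iic (P.k n)) :=
  strictMonoOn_Iic_of_lt_succ (P.mono n)

variable {P n}

theorem t_lt_t {i j : ℕ} (hij : i < j) (hj : j ≤ P.k n) : P.t n i < P.t n j :=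
  P.strictMonoOn_t n (show i ≤ P.k n by omega) hj hij

theorem left_lt_right (P : PartitionSeq r T) : r < T := by
  simpa [P.left 0, P.right 0] using P.t_lt_t (n := 0) (P.k_pos 0) le_rfl

theorem t_le_t {i j : ℕ} (hij : i ≤ j) (hj : j ≤ P.k n) : P.t n i ≤ P.t n j :=
  (P.strictMonoOn_t n).monotoneOn (show i ≤ P.k n by omega) hj hij

theorem t_mem_Icc {i : ℕ} (hi : i ≤ P.k n) : P.t n i ∈ Icc r T := by
  refine ⟨?_, ?_⟩
  · simpa [P.left n] using P.t_le_t (Nat.zero_le i) hi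
  · simpa [P.right n] using P.t_le_t hi le_rfl

theorem incr_nonneg {i : ℕ} (hi : i ≤ P.k n) : 0 ≤ P.incr n i :=
  sub_nonneg.mpr (P.t_le_t (Nat.sub_le i 1) hi)

theorem mesh_pos : 0 < P.mesh n :=
  (sub_pos.mpr (P.mono n 0 (P.k_pos n))).trans_le
    (Finset.le_sup' (fun i => P.t n (i + 1) - P.t n i) (Finset.mem_range.mpr (P.k_pos n)))

theorem incr_le_mesh {i : ℕ} (hi : i ≤ P.k n) : P.incr n i ≤ P.mesh n := by
  rcases Nat.eq_zero_or_pos i with rfl | hi0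
  · simpa [incr] using mesh_pos.le
  · obtain ⟨i, rfl⟩ := Nat.exists_eq_add_of_lt hi0
    exact Finset.le_sup' (fun i => P.t n (i + 1) - P.t n i) (Finset.mem_range.mpr (by omega))

theorem sum_range_incr (j : ℕ) : ∑ i ∈ Finset.range j, P.incr n i = P.t n (j - 1) - r := by
  induction j with
  | zero => simp [P.left n]
  | succ j ih => rw [Finset.sum_range_succ, ih, incr, Nat.add_sub_cancel]; ring

theorem sum_range_succ_k_incr : ∑ i ∈ Finset.range (P.k n + 1), P.incr n i = T - r := by
  rw [sum_range_incr, Nat.add_sub_cancel, P.right n]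

theorem mesh_le_sub : P.mesh n ≤ T - r := by
  refine Finset.sup'_le _ _ fun i hi => ?_
  rw [Finset.mem_range] at hi
  rw [← sum_range_succ_k_incr (P := P) (n := n)]
  exact Finset.single_le_sum (fun i hi => incr_nonneg (Nat.lt_succ_iff.mp (Finset.mem_range.mp hi)))
    (Finset.mem_range.mpr (by omega) : i + 1 ∈ Finset.range (P.k n + 1))

theorem idxLe_eq {i : ℕ} (hi : i < P.k n) {s : ℝ} (hs : s ∈ Ioo (P.t n i) (P.t n (i + 1))) :
    P.idxLe n s = i := by
  refine Nat.findGreatest_eq_iff.mpr ⟨by omega, fun _ => hs.1.le, fun l hil hlk hle => ?_⟩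
  exact hle.not_gt (hs.2.trans_le (P.t_le_t hil (by omega)))

variable {E : Type*} [NormedAddCommGroup E] [NormedSpace ℝ E]

theorem gamma_sub_one_smul_eqOn (f : ℝ → E) {i : ℕ} (hi : i < P.k n) :
    EqOn (fun s => (P.gamma n s - 1) • f (P.pred n s))
      (fun _ => (P.incr n i / P.incr n (i + 1) - 1) • f (P.t n (i - 1)))
      (Ioo (P.t n i) (P.t n (i + 1))) := fun s hs => by
  simp only [gamma, pred, incr, idxLe_eq hi hs, Nat.add_sub_cancel]

theorem intervalIntegrable_gamma_sub_one_smul (f : ℝ → E) {i : ℕ} (hi : i < P.k n) :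
    IntervalIntegrable (fun s => (P.gamma n s - 1) • f (P.pred n s)) volume
      (P.t n i) (P.t n (i + 1)) := by
  rw [intervalIntegrable_iff_integrableOn_Ioc_of_le (P.mono n i hi).le,
    integrableOn_Ioc_iff_integrableOn_Ioo]
  exact (integrableOn_const measure_Ioo_lt_top.ne).congr_fun
    (gamma_sub_one_smul_eqOn f hi).symm measurableSet_Ioo

variable [CompleteSpace E]

theorem intervalIntegral_gamma_sub_one_smul (f : ℝ → E) {i : ℕ} (hi : i < P.k n) :
    ∫ s in P.t n i..P.t n (i + 1), (P.gamma n s - 1) • f (P.pred n s)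
      = (P.incr n i - P.incr n (i + 1)) • f (P.t n (i - 1)) := by
  have hpos : 0 < P.incr n (i + 1) := by
    simpa [incr] using P.mono n i hi
  rw [intervalIntegral.integral_of_le (P.mono n i hi).le, integral_Ioc_eq_integral_Ioo,
    setIntegral_congr_fun measurableSet_Ioo (gamma_sub_one_smul_eqOn f hi), setIntegral_const,
    Real.volume_real_Ioo_of_le (P.mono n i hi).le, smul_smul]
  congr 1
  simp only [incr, Nat.add_sub_cancel] at hpos ⊢
  field_simp

theorem integral_Ioc_gamma_sub_one_smul_eq_sum (f : ℝ → E) {j : ℕ} (hj : j ≤ P.k n) :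
    ∫ s in Ioc r (P.t n j), (P.gamma n s - 1) • f (P.pred n s)
      = ∑ i ∈ Finset.range j, (P.incr n i - P.incr n (i + 1)) • f (P.t n (i - 1)) := by
  have hsum := intervalIntegral.sum_integral_adjacent_intervals (a := P.t n) (μ := volume)
    fun i (hi : i < j) => intervalIntegrable_gamma_sub_one_smul f (by omega)
  rw [P.left n] at hsum
  rw [← intervalIntegral.integral_of_le (P.t_mem_Icc hj).1, ← hsum]
  exact Finset.sum_congr rfl fun i hi =>
    intervalIntegral_gamma_sub_one_smul f (by rw [Finset.mem_range] at hi; omega)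

theorem norm_integral_Ioc_gamma_sub_one_smul_le (f : ℝ → E) {j : ℕ} (hj : j ≤ P.k n) :
    ‖∫ s in Ioc r (P.t n j), (P.gamma n s - 1) • f (P.pred n s)‖
      ≤ ∑ i ∈ Finset.range j, P.incr n i * ‖f (P.t n (i - 1)) - f (P.t n (i - 1 - 1))‖
        + P.incr n j * ‖f (P.t n (j - 1 - 1))‖ := by
  rw [integral_Ioc_gamma_sub_one_smul_eq_sum f hj,
    Finset.sum_range_sub_smul_eq_sum_smul_sub (fun i => f (P.t n (i - 1))) (by simp [incr])]
  refine (norm_sub_le _ _).trans (add_le_add ((norm_sum_le _ _).trans_eq ?_) ?_)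
  · refine Finset.sum_congr rfl fun i hi => ?_
    rw [norm_smul, Real.norm_of_nonneg (incr_nonneg (by rw [Finset.mem_range] at hi; omega))]
  · rw [norm_smul, Real.norm_of_nonneg (incr_nonneg hj)]

end PartitionSeq

section Volterra

variable {r T : ℝ} {P : PartitionSeq r T} {n : ℕ} {E F : Type*} [NormedAddCommGroup E]
  [NormedAddCommGroup F] {G : ℝ → ℝ → (ℝ → E) → F} {x : ℝ → E} {lam₀ c₀ : ℝ}

theorem norm_volterra_sub_at_consecutive_le (hlam₀ : 0 ≤ lam₀)
    (hlip : ∀ s t u : ℝ, r ≤ s → s < t → t < u → u ≤ T →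
      ‖G u t x - G u s x‖ ≤ lam₀ * dInfty T t x s x)
    {i j : ℕ} (hij : i < j) (hj : j ≤ P.k n) :
    ‖G (P.t n j) (P.t n (i - 1)) x - G (P.t n j) (P.t n (i - 1 - 1)) x‖
      ≤ lam₀ * (√(P.mesh n) + supNorm T
          (fun u => stopAt x (P.t n (i - 1)) u - stopAt x (P.t n (i - 1 - 1)) u)) := by
  rcases Nat.lt_or_ge i 2 with hi | hi
  · rw [show i - 1 - 1 = i - 1 by omega, sub_self, norm_zero]
    exact mul_nonneg hlam₀ (add_nonneg (Real.sqrt_nonneg _) (supNorm_nonneg _ _))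
  · refine (hlip _ _ _ (P.t_mem_Icc (by omega)).1 (P.t_lt_t (by omega) (by omega))
      (P.t_lt_t (by omega) hj) (P.t_mem_Icc hj).2).trans ?_
    have hincr : |P.t n (i - 1) - P.t n (i - 1 - 1)| ≤ P.mesh n :=
      (abs_of_nonneg (P.incr_nonneg (n := n) (i := i - 1) (by omega))).trans_le
        (P.incr_le_mesh (by omega))
    rw [dInfty, ← Real.sqrt_eq_rpow]
    gcongr

variable [NormedSpace ℝ F] [CompleteSpace F]

theorem norm_integral_Ioc_gamma_sub_one_smul_volterra_le (hlam₀ : 0 ≤ lam₀)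
    (hlip : ∀ s t u : ℝ, r ≤ s → s < t → t < u → u ≤ T →
      ‖G u t x - G u s x‖ ≤ lam₀ * dInfty T t x s x)
    (hgrow : ∀ t s : ℝ, r ≤ s → s ≤ t → t ≤ T → ‖G t s x‖ ≤ c₀ * (1 + supNorm T x))
    {j : ℕ} (hj : j ≤ P.k n) :
    ‖∫ s in Ioc r (P.t n j), (P.gamma n s - 1) • G (P.t n j) (P.pred n s) x‖
      ≤ lam₀ * ∑ i ∈ Finset.range (P.k n + 1), P.incr n i * (√(P.mesh n) + supNorm T
          (fun u => stopAt x (P.t n (i - 1)) u - stopAt x (P.t n (i - 1 - 1)) u))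
        + P.mesh n * (c₀ * (1 + supNorm T x)) := by
  refine (PartitionSeq.norm_integral_Ioc_gamma_sub_one_smul_le (fun s => G (P.t n j) s x)
    hj).trans (add_le_add ?_ ?_)
  · rw [Finset.mul_sum]
    refine (Finset.sum_le_sum fun i hi => ?_).trans (Finset.sum_le_sum_of_subset_of_nonneg
      (Finset.range_subset_range.mpr (by omega)) fun i hi _ => ?_)
    · rw [Finset.mem_range] at hi
      rw [mul_left_comm]
      exact mul_le_mul_of_nonneg_left (norm_volterra_sub_at_consecutive_le hlam₀ hlip hi hj)
        (P.incr_nonneg (by omega))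
    · rw [Finset.mem_range] at hi
      exact mul_nonneg hlam₀ (mul_nonneg (P.incr_nonneg (by omega))
        (add_nonneg (Real.sqrt_nonneg _) (supNorm_nonneg _ _)))
  · exact mul_le_mul (P.incr_le_mesh hj) (hgrow _ _ (P.t_mem_Icc (by omega)).1
      (P.t_le_t (by omega) hj) (P.t_mem_Icc hj).2) (norm_nonneg _) PartitionSeq.mesh_pos.le

theorem enorm_integral_Ioc_gamma_sub_one_smul_volterra_le (hlam₀ : 0 ≤ lam₀)
    (hlip : ∀ s t u : ℝ, r ≤ s → s < t → t < u → u ≤ T →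
      ‖G u t x - G u s x‖ ≤ lam₀ * dInfty T t x s x)
    (hgrow : ∀ t s : ℝ, r ≤ s → s ≤ t → t ≤ T → ‖G t s x‖ ≤ c₀ * (1 + supNorm T x))
    {j : ℕ} (hj : j ≤ P.k n) :
    ‖∫ s in Ioc r (P.t n j), (P.gamma n s - 1) • G (P.t n j) (P.pred n s) x‖ₑ
      ≤ ENNReal.ofReal lam₀ * ∑ i ∈ Finset.range (P.k n + 1), ENNReal.ofReal (P.incr n i) *
          (ENNReal.ofReal √(P.mesh n) + esupNorm T
            (fun u => stopAt x (P.t n (i - 1)) u - stopAt x (P.t n (i - 1 - 1)) u))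
        + ENNReal.ofReal (P.mesh n) * ENNReal.ofReal c₀ * (1 + esupNorm T x) := by
  have hincr : ∀ i ∈ Finset.range (P.k n + 1), 0 ≤ P.incr n i := fun i hi =>
    P.incr_nonneg (Nat.lt_succ_iff.mp (Finset.mem_range.mp hi))
  rw [← ofReal_norm]
  refine (ENNReal.ofReal_le_ofReal (norm_integral_Ioc_gamma_sub_one_smul_volterra_le
    hlam₀ hlip hgrow hj)).trans (ENNReal.ofReal_add_le.trans (add_le_add ?_ ?_))
  · rw [ENNReal.ofReal_mul hlam₀, ENNReal.ofReal_sum_of_nonneg fun i hi =>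
      mul_nonneg (hincr i hi) (add_nonneg (Real.sqrt_nonneg _) (supNorm_nonneg _ _))]
    gcongr with i hi
    rw [ENNReal.ofReal_mul (hincr i hi)]
    gcongr
    exact ENNReal.ofReal_add_le.trans (add_le_add le_rfl (ofReal_supNorm_le_esupNorm _ _))
  · rw [ENNReal.ofReal_mul PartitionSeq.mesh_pos.le, mul_assoc,
      ENNReal.ofReal_mul' (by linarith [supNorm_nonneg T x])]
    gcongr
    exact ENNReal.ofReal_add_le.trans (by
      rw [ENNReal.ofReal_one]; exact add_le_add le_rfl (ofReal_supNorm_le_esupNorm _ _))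

end Volterra

section Moments

variable {Ω : Type*} [MeasurableSpace Ω] {μ : Measure Ω} {p : ℝ} {r T : ℝ}
  {P : PartitionSeq r T} {n : ℕ} {E : Type*} [NormedAddCommGroup E] {Y : ℝ → Ω → E}
  {C : ℝ≥0∞}

theorem measurable_esupNorm_stopAt_sub [MeasurableSpace E] [BorelSpace E]
    [SecondCountableTopology E] (hYc : ∀ ω, Continuous fun u => Y u ω)
    (hYm : ∀ u, Measurable (Y u)) (s t : ℝ) :
    Measurable fun ω => esupNorm T fun u =>
      stopAt (fun v => Y v ω) s u - stopAt (fun v => Y v ω) t u :=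
  measurable_esupNorm T (fun ω => ((hYc ω).comp (continuous_id.min continuous_const)).sub
    ((hYc ω).comp (continuous_id.min continuous_const))) fun _ => (hYm _).sub (hYm _)

theorem eLpNorm'_esupNorm_stopAt_sub_le (hp : 0 < p)
    (hinc : ∀ s ∈ Icc r T, ∀ t ∈ Icc r T, t < s →
      ∫⁻ ω, (esupNorm T fun u =>
          stopAt (fun v => Y v ω) s u - stopAt (fun v => Y v ω) t u) ^ p ∂μ
        ≤ C * ENNReal.ofReal ((s - t) ^ (p / 2)))
    {i : ℕ} (hi : i ≤ P.k n) :
    eLpNorm' (fun ω => esupNorm T fun u => stopAt (fun v => Y v ω) (P.t n (i - 1)) u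
        - stopAt (fun v => Y v ω) (P.t n (i - 1 - 1)) u) p μ
      ≤ C ^ (1 / p) * ENNReal.ofReal √(P.mesh n) := by
  rcases Nat.lt_or_ge i 2 with hi2 | hi2
  · simp only [show i - 1 - 1 = i - 1 by omega, sub_self, esupNorm, nnnorm_zero,
      ENNReal.coe_zero, ENNReal.iSup_zero]
    exact (eLpNorm'_zero (ε := ℝ≥0∞) hp).trans_le zero_le
  refine eLpNorm'_le_of_lintegral_rpow_le hp ((hinc _ (P.t_mem_Icc (by omega)) _
    (P.t_mem_Icc (by omega)) (P.t_lt_t (by omega) (by omega))).trans ?_)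
  rw [show P.t n (i - 1) - P.t n (i - 1 - 1) = P.incr n (i - 1) from rfl,
    ENNReal.ofReal_rpow_div_two (P.incr_nonneg (n := n) (i := i - 1) (by omega)) hp.le]
  gcongr
  exact P.incr_le_mesh (by omega)

variable [IsProbabilityMeasure μ] [MeasurableSpace E] [BorelSpace E] [SecondCountableTopology E]

theorem eLpNorm'_sum_incr_mul_esupNorm_stopAt_sub_le (hYc : ∀ ω, Continuous fun u => Y u ω)
    (hYm : ∀ u, Measurable (Y u)) (hp : 1 ≤ p)
    (hinc : ∀ s ∈ Icc r T, ∀ t ∈ Icc r T, t < s →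
      ∫⁻ ω, (esupNorm T fun u =>
          stopAt (fun v => Y v ω) s u - stopAt (fun v => Y v ω) t u) ^ p ∂μ
        ≤ C * ENNReal.ofReal ((s - t) ^ (p / 2))) :
    eLpNorm' (fun ω => ∑ i ∈ Finset.range (P.k n + 1), ENNReal.ofReal (P.incr n i) *
        (ENNReal.ofReal √(P.mesh n) + esupNorm T fun u =>
          stopAt (fun v => Y v ω) (P.t n (i - 1)) u
            - stopAt (fun v => Y v ω) (P.t n (i - 1 - 1)) u)) p μ
      ≤ ENNReal.ofReal (T - r) * (ENNReal.ofReal √(P.mesh n) * (1 + C ^ (1 / p))) := by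
  have hDm (i : ℕ) := measurable_esupNorm_stopAt_sub (T := T) hYc hYm
    (P.t n (i - 1)) (P.t n (i - 1 - 1))
  rw [← Finset.sum_fn]
  refine (eLpNorm'_sum_le (fun i _ => ((hDm i).const_add _ |>.const_mul _).aestronglyMeasurable)
    hp).trans ?_
  calc _ ≤ ∑ i ∈ Finset.range (P.k n + 1), ENNReal.ofReal (P.incr n i) *
        (ENNReal.ofReal √(P.mesh n) + C ^ (1 / p) * ENNReal.ofReal √(P.mesh n)) := by
        gcongr with i hi
        refine (eLpNorm'_const_mul_le _ ((hDm i).const_add _).aemeasurable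
          (by linarith)).trans ?_
        gcongr
        refine (eLpNorm'_const_add_le _ (hDm i).aemeasurable hp).trans ?_
        gcongr
        exact eLpNorm'_esupNorm_stopAt_sub_le (by linarith) hinc
          (Nat.lt_succ_iff.mp (Finset.mem_range.mp hi))
    _ = _ := by
      rw [← Finset.sum_mul, ← ENNReal.ofReal_sum_of_nonneg fun i hi =>
        P.incr_nonneg (Nat.lt_succ_iff.mp (Finset.mem_range.mp hi)),
        PartitionSeq.sum_range_succ_k_incr]
      ring

theorem lintegral_iSup_nnnorm_integral_gamma_sub_one_smul_volterra_rpow_le {F : Type*}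
    [NormedAddCommGroup F] [NormedSpace ℝ F] [CompleteSpace F] {G : ℝ → ℝ → (ℝ → E) → F}
    {lam₀ c₀ : ℝ} (hlam₀ : 0 ≤ lam₀)
    (hlip : ∀ ω, ∀ s t u : ℝ, r ≤ s → s < t → t < u → u ≤ T →
      ‖G u t (fun v => Y v ω) - G u s (fun v => Y v ω)‖
        ≤ lam₀ * dInfty T t (fun v => Y v ω) s (fun v => Y v ω))
    (hgrow : ∀ ω, ∀ t s : ℝ, r ≤ s → s ≤ t → t ≤ T →
      ‖G t s (fun v => Y v ω)‖ ≤ c₀ * (1 + supNorm T (fun v => Y v ω)))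
    (hYc : ∀ ω, Continuous fun u => Y u ω) (hYm : ∀ u, Measurable (Y u)) (hp : 1 ≤ p)
    (hsup : ∫⁻ ω, (esupNorm T fun u => Y u ω) ^ p ∂μ ≤ C)
    (hinc : ∀ s ∈ Icc r T, ∀ t ∈ Icc r T, t < s →
      ∫⁻ ω, (esupNorm T fun u =>
          stopAt (fun v => Y v ω) s u - stopAt (fun v => Y v ω) t u) ^ p ∂μ
        ≤ C * ENNReal.ofReal ((s - t) ^ (p / 2))) :
    ∫⁻ ω, (⨆ j : Fin (P.k n + 1),
        (‖∫ s in Ioc r (P.t n j),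
            (P.gamma n s - 1) • G (P.t n j) (P.pred n s) (fun v => Y v ω)‖₊ : ℝ≥0∞) ^ p) ∂μ
      ≤ ((ENNReal.ofReal lam₀ * ENNReal.ofReal (T - r)
            + ENNReal.ofReal √(T - r) * ENNReal.ofReal c₀) * (1 + C ^ (1 / p))) ^ p
          * ENNReal.ofReal (P.mesh n ^ (p / 2)) := by
  have hp0 : 0 < p := by linarith
  set a := ENNReal.ofReal √(P.mesh n)
  set A := fun ω => ∑ i ∈ Finset.range (P.k n + 1), ENNReal.ofReal (P.incr n i) *
    (a + esupNorm T fun u => stopAt (fun v => Y v ω) (P.t n (i - 1)) u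
      - stopAt (fun v => Y v ω) (P.t n (i - 1 - 1)) u)
  set S := fun ω => esupNorm T fun u => Y u ω
  have hAm : Measurable A := Finset.measurable_sum _ fun i _ =>
    ((measurable_esupNorm_stopAt_sub hYc hYm _ _).const_add a).const_mul _
  have hSm : Measurable S := measurable_esupNorm T hYc hYm
  have hS : eLpNorm' S p μ ≤ C ^ (1 / p) :=
    (eLpNorm'_le_of_lintegral_rpow_le (D := 1) hp0 (by rwa [ENNReal.one_rpow, mul_one])).trans_eq
      (mul_one _)
  set g := fun ω =>
    ENNReal.ofReal lam₀ * A ω + ENNReal.ofReal (P.mesh n) * ENNReal.ofReal c₀ * (1 + S ω)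
  have hg : eLpNorm' g p μ ≤ (ENNReal.ofReal lam₀ * ENNReal.ofReal (T - r)
      + ENNReal.ofReal √(T - r) * ENNReal.ofReal c₀) * (1 + C ^ (1 / p)) * a := calc
    eLpNorm' g p μ ≤ ENNReal.ofReal lam₀ * eLpNorm' A p μ
        + ENNReal.ofReal (P.mesh n) * ENNReal.ofReal c₀ * (1 + eLpNorm' S p μ) :=
      (eLpNorm'_add_le (hAm.const_mul _).aestronglyMeasurable
        ((hSm.const_add 1).const_mul _).aestronglyMeasurable hp).trans
        (add_le_add (eLpNorm'_const_mul_le _ hAm.aemeasurable hp0)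
          ((eLpNorm'_const_mul_le _ (hSm.const_add 1).aemeasurable hp0).trans
            (by gcongr; exact eLpNorm'_const_add_le 1 hSm.aemeasurable hp)))
    _ ≤ ENNReal.ofReal lam₀ * (ENNReal.ofReal (T - r) * (a * (1 + C ^ (1 / p))))
        + a * ENNReal.ofReal √(T - r) * ENNReal.ofReal c₀ * (1 + C ^ (1 / p)) := by
      gcongr
      · exact eLpNorm'_sum_incr_mul_esupNorm_stopAt_sub_le hYc hYm hp hinc
      · rw [← ENNReal.ofReal_mul (Real.sqrt_nonneg _), ← Real.sqrt_mul PartitionSeq.mesh_pos.le]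
        refine ENNReal.ofReal_le_ofReal (Real.le_sqrt_of_sq_le ?_)
        nlinarith [PartitionSeq.mesh_pos (P := P) (n := n), P.mesh_le_sub (n := n)]
    _ = _ := by ring
  calc _ ≤ ∫⁻ ω, g ω ^ p ∂μ := lintegral_mono fun ω => iSup_le fun j => by
        gcongr
        exact enorm_integral_Ioc_gamma_sub_one_smul_volterra_le hlam₀ (hlip ω) (hgrow ω)
          (Nat.lt_succ_iff.mp j.isLt)
    _ = eLpNorm' g p μ ^ p := lintegral_rpow_eq_eLpNorm'_rpow g hp0
    _ ≤ _ := by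
      rw [ENNReal.ofReal_rpow_div_two PartitionSeq.mesh_pos.le hp0.le,
        ← ENNReal.mul_rpow_of_nonneg _ _ hp0.le]
      gcongr

end Moments

theorem gamma_weighted_integral_estimate_general {m : ℕ} {Ω : Type*} [mΩ : MeasurableSpace Ω]
    (μ : Measure Ω) [IsProbabilityMeasure μ] (F : Filtration ℝ mΩ)
    (r T : ℝ)
    (P : PartitionSeq r T)
    (G : ℝ → ℝ → (ℝ → Vec m) → Vec m)
    (lam₀ c₀ : ℝ) (hlam₀ : 0 ≤ lam₀)
    (hlip : ∀ s t u : ℝ, r ≤ s → s < t → t < u → u ≤ T → ∀ x : ℝ → Vec m, Continuous x →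
      ‖G u t x - G u s x‖ ≤ lam₀ * dInfty T t x s x)
    (hgrow : ∀ t s : ℝ, r ≤ s → s ≤ t → t ≤ T → ∀ x : ℝ → Vec m, Continuous x →
      ‖G t s x‖ ≤ c₀ * (1 + supNorm T x))
    (p cp₀ : ℝ) (hp : 1 ≤ p)
    (Y : ℕ → ℝ → Ω → Vec m)
    (hYc : ∀ n ω, Continuous fun u => Y n u ω)
    (hYad : ∀ n, Adapted F fun u => Y n u)
    (hmom : ∀ n, ∀ s ∈ Icc r T, ∀ t ∈ Icc r T, s ≠ t →
      (∫⁻ ω, (esupNorm T fun u => Y n u ω) ^ p ∂μ)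
        + (∫⁻ ω, (esupNorm T fun u =>
              stopAt (fun v => Y n v ω) s u - stopAt (fun v => Y n v ω) t u) ^ p ∂μ)
          / ENNReal.ofReal (|s - t| ^ (p / 2))
      ≤ ENNReal.ofReal cp₀
          * (1 + ∫⁻ ω, (esupNorm T (stopAt (fun v => Y n v ω) r)) ^ p ∂μ)) :
    ∃ cp > (0:ℝ), ∀ n,
      ∫⁻ ω, (⨆ j : Fin (P.k n + 1),
        (‖∫ s in Ioc r (P.t n j),
            (P.gamma n s - 1) • G (P.t n j) (P.pred n s) (fun v => Y n v ω)‖₊ : ℝ≥0∞) ^ p) ∂μ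
      ≤ ENNReal.ofReal cp * ENNReal.ofReal (P.mesh n ^ (p / 2))
          * (1 + ∫⁻ ω, (esupNorm T (stopAt (fun v => Y n v ω) r)) ^ p ∂μ) := by
  set K := (ENNReal.ofReal lam₀ * ENNReal.ofReal (T - r)
    + ENNReal.ofReal √(T - r) * ENNReal.ofReal c₀) * (1 + ENNReal.ofReal cp₀ ^ (1 / p))
  have hK : K ^ p ≠ ⊤ := by finiteness
  refine ⟨(K ^ p).toReal + 1, by positivity, fun n => ?_⟩
  have hrT := P.left_lt_right
  have hsup := le_self_add.trans (hmom n r ⟨le_rfl, hrT.le⟩ T ⟨hrT.le, le_rfl⟩ hrT.ne)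
  have hinc (s) (hs : s ∈ Icc r T) (t) (ht : t ∈ Icc r T) (hts : t < s) := by
    have h := le_add_self.trans (hmom n s hs t ht hts.ne')
    rwa [abs_of_pos (sub_pos.mpr hts), ENNReal.div_le_iff
      (ENNReal.ofReal_pos.mpr (Real.rpow_pos_of_pos (sub_pos.mpr hts) _)).ne'
      ENNReal.ofReal_ne_top] at h
  calc _ ≤ _ := lintegral_iSup_nnnorm_integral_gamma_sub_one_smul_volterra_rpow_le (P := P) hlam₀
        (fun ω s t u h₁ h₂ h₃ h₄ => hlip s t u h₁ h₂ h₃ h₄ _ (hYc n ω))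
        (fun ω t s h₁ h₂ h₃ => hgrow t s h₁ h₂ h₃ _ (hYc n ω)) (hYc n)
        (fun u => (hYad n u).mono (F.le u) le_rfl) hp hsup hinc
    _ ≤ K ^ p * (1 + ∫⁻ ω, (esupNorm T (stopAt (fun v => Y n v ω) r)) ^ p ∂μ)
          * ENNReal.ofReal (P.mesh n ^ (p / 2)) := by
      gcongr
      exact ENNReal.mul_one_add_mul_rpow_le _ _ le_self_add (by linarith)
    _ ≤ _ := by
      rw [mul_right_comm]
      gcongr
      rw [ENNReal.ofReal_add ENNReal.toReal_nonneg zero_le_one, ENNReal.ofReal_toReal hK]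
      exact le_self_add

/-- estimate for Volterra integrals weighted by `γₙ(s) - 1` (Lemma on the
second auxiliary remainder). -/
theorem gamma_weighted_integral_estimate {m : ℕ} {Ω : Type*} [mΩ : MeasurableSpace Ω]
    (μ : Measure Ω) [IsProbabilityMeasure μ] (F : Filtration ℝ mΩ)
    (r T : ℝ) (hr : 0 ≤ r) (hrT : r < T)
    (P : PartitionSeq r T) (cT : ℝ) (hcT : 1 ≤ cT) (hbal : P.Balanced cT)
    (G : ℝ → ℝ → (ℝ → Vec m) → Vec m)
    (hna : ∀ t s : ℝ, r ≤ s → s ≤ t → t ≤ T → ∀ x : ℝ → Vec m, Continuous x →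
      G t s x = G t s (stopAt x s))
    (lam₀ c₀ : ℝ) (hlam₀ : 0 ≤ lam₀) (hc₀ : 0 ≤ c₀)
    (hlip : ∀ s t u : ℝ, r ≤ s → s < t → t < u → u ≤ T → ∀ x : ℝ → Vec m, Continuous x →
      ‖G u t x - G u s x‖ ≤ lam₀ * dInfty T t x s x)
    (hgrow : ∀ t s : ℝ, r ≤ s → s ≤ t → t ≤ T → ∀ x : ℝ → Vec m, Continuous x →
      ‖G t s x‖ ≤ c₀ * (1 + supNorm T x))
    (p cp₀ : ℝ) (hp : 1 ≤ p) (hcp₀ : 0 ≤ cp₀)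
    (Y : ℕ → ℝ → Ω → Vec m)
    (hYc : ∀ n ω, Continuous fun u => Y n u ω)
    (hYad : ∀ n, Adapted F fun u => Y n u)
    (hmom : ∀ n, ∀ s ∈ Icc r T, ∀ t ∈ Icc r T, s ≠ t →
      (∫⁻ ω, (esupNorm T fun u => Y n u ω) ^ p ∂μ)
        + (∫⁻ ω, (esupNorm T fun u =>
              stopAt (fun v => Y n v ω) s u - stopAt (fun v => Y n v ω) t u) ^ p ∂μ)
          / ENNReal.ofReal (|s - t| ^ (p / 2))
      ≤ ENNReal.ofReal cp₀
          * (1 + ∫⁻ ω, (esupNorm T (stopAt (fun v => Y n v ω) r)) ^ p ∂μ)) :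
    ∃ cp > (0:ℝ), ∀ n,
      ∫⁻ ω, (⨆ j : Fin (P.k n + 1),
        (‖∫ s in Ioc r (P.t n j),
            (P.gamma n s - 1) • G (P.t n j) (P.pred n s) (fun v => Y n v ω)‖₊ : ℝ≥0∞) ^ p) ∂μ
      ≤ ENNReal.ofReal cp * ENNReal.ofReal (P.mesh n ^ (p / 2))
          * (1 + ∫⁻ ω, (esupNorm T (stopAt (fun v => Y n v ω) r)) ^ p ∂μ) :=
  gamma_weighted_integral_estimate_general (mΩ := mΩ) μ F r T P G lam₀ c₀ hlam₀ hlip hgrow p cp₀ hp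
    Y hYc hYad hmom
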